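/- Let H₁ : L₂^p → L₂^q and H₂ : L₂^q → L₂^p be operators such that at least one of the MIMO SRGs SRG(H₁), SRG(H₂) satisfies the chord property, both SRG(H₁) and SRG(H₂) are bounded subsets of ℂ, and there exists r > 0 such that for every τ ∈ [0,1], dist( { z/|z|² : z ∈ SRG(H₁), z ≠ 0 }, −τ·SRG(H₂) ) ≥ r. Then for every u ∈ L₂^p there exists a unique e ∈ L₂^p with e = u − H₂(H₁ e), and the closed-loop map u ↦ H₁ e has incremental L₂-gain at most 1/r, i.e. ‖H₁e(u₁) − H₁e(u₂)‖ ≤ (1/r)·‖u₁ − u₂‖ for all u₁, u₂ ∈ L₂^p. -/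

import Mathlib

/-!
Pad all signals into `L₂^{max(p,q)}`. For an input increment `Δu`, let `Δy` be the resulting
increment of `H₁` and `Δw` the increment of `H₂` between the two outputs of `H₁`; let `z₁` be the
SRG point of `(Δu, Δy)` and `z₂` that of `(Δy, Δw)`. Cauchy–Schwarz for the components of `Δu` and
`Δw` orthogonal to `Δy` gives `‖Δy‖ · |z₁⁻¹ + τ z₂| ≤ ‖Δu + τ Δw‖`. Since `z₁ / |z₁|² = conj z₁⁻¹`
and `conj z₂ ∈ SRG(H₂)`, the distance hypothesis turns this into `r ‖Δy‖ ≤ ‖Δu + τ Δw‖` for every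
`τ ∈ [0, 1]`.

At `τ = 0` this makes `H₁` Lipschitz, and for each `τ` it makes `I + τ H₂ H₁` antilipschitz with a
constant independent of `τ`. Surjectivity therefore propagates from `τ = 0` to `τ = 1` in steps
short enough for Banach's fixed point theorem, and at `τ = 1` the bound is the gain estimate.
-/

open MeasureTheory ComplexConjugate
open scoped RealInnerProductSpace

/-- `L₂^d = L²([0,∞), ℝ^d)`. -/
noncomputable abbrev L2S (d : ℕ) :=
  MeasureTheory.Lp (EuclideanSpace ℝ (Fin d)) 2 (MeasureTheory.volume.restrict (Set.Ici (0 : ℝ)))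

/-- Resize map `ℝ^a → ℝ^b`: zero-padding if `a ≤ b`, projection if `b ≤ a`. -/
noncomputable def resizeCLM (a b : ℕ) :
    EuclideanSpace ℝ (Fin a) →L[ℝ] EuclideanSpace ℝ (Fin b) :=
  LinearMap.toContinuousLinearMap
    { toFun := fun x => WithLp.toLp 2 (fun i => if h : (i : ℕ) < a then x ⟨(i : ℕ), h⟩ else 0)
      map_add' := by
        intro x y
        ext i
        by_cases h : (i : ℕ) < a <;> simp [PiLp.add_apply, h]
      map_smul' := by
        intro c x
        ext i
        by_cases h : (i : ℕ) < a <;> simp [PiLp.smul_apply, h] }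

/-- The induced map on `L₂` spaces; for `a ≤ b` this is the zero-padding embedding `ι_{b←a}`,
for `b ≤ a` the projection `π_{b←a}`. -/
noncomputable def LpResize (a b : ℕ) : L2S a →L[ℝ] L2S b :=
  (resizeCLM a b).compLpL 2 (MeasureTheory.volume.restrict (Set.Ici (0 : ℝ)))

/-- The pairing `Σ_{i < min(p,q)} ∫₀^∞ Δu_i(t)·Δy_i(t) dt`, realized as the inner product of the
zero-padded signals in `L₂^{max(p,q)}`. -/
noncomputable def mimoPairing {p q : ℕ} (du : L2S p) (dy : L2S q) : ℝ :=
  ⟪LpResize p (max p q) du, LpResize q (max p q) dy⟫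

/-- The point `(‖Δy‖/‖Δu‖)·e^{iθ}` with `cos θ` given by the normalized MIMO pairing,
`θ ∈ [0,π]` (equal to `0` when `Δy = 0`). -/
noncomputable def mimoPoint {p q : ℕ} (du : L2S p) (dy : L2S q) : ℂ :=
  ((‖dy‖ / ‖du‖ : ℝ) : ℂ) *
    Complex.exp (Complex.I * ((Real.arccos (mimoPairing du dy / (‖du‖ * ‖dy‖)) : ℝ) : ℂ))

/-- The MIMO Scaled Relative Graph of an operator `R : L₂^p → L₂^q` (the SRG of the zero-padded
operator on `L₂^{max(p,q)}` over the zero-padded input subspace); both signs of the angle are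
included. -/
noncomputable def mimoSRG {p q : ℕ} (R : L2S p → L2S q) : Set ℂ :=
  { z | ∃ u₁ u₂ : L2S p, u₁ ≠ u₂ ∧
      (z = mimoPoint (u₁ - u₂) (R u₁ - R u₂) ∨
        z = conj (mimoPoint (u₁ - u₂) (R u₁ - R u₂))) }

/-- A set `C ⊆ ℂ` satisfies the chord property if for every `z ∈ C` the segment `[z, z̄]`
is contained in `C`. -/
def ChordProperty (C : Set ℂ) : Prop :=
  ∀ z ∈ C, ∀ α ∈ Set.Icc (0 : ℝ) 1, (α : ℂ) * z + ((1 - α : ℝ) : ℂ) * conj z ∈ C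

open scoped NNReal

theorem inner_resizeCLM {a b : ℕ} (hab : a ≤ b) (x y : EuclideanSpace ℝ (Fin a)) :
    ⟪resizeCLM a b x, resizeCLM a b y⟫ = ⟪x, y⟫ := by
  obtain ⟨k, rfl⟩ := Nat.exists_eq_add_of_le hab
  simp [PiLp.inner_apply, Fin.sum_univ_add, resizeCLM]

theorem inner_LpResize {a b : ℕ} (hab : a ≤ b) (f g : L2S a) :
    ⟪LpResize a b f, LpResize a b g⟫ = ⟪f, g⟫ := by
  rw [L2.inner_def, L2.inner_def]
  refine integral_congr_ae ?_
  filter_upwards [(resizeCLM a b).coeFn_compLpL f, (resizeCLM a b).coeFn_compLpL g] with t hf hg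
  simp only [LpResize, hf, hg, inner_resizeCLM hab]

theorem norm_LpResize {a b : ℕ} (hab : a ≤ b) (f : L2S a) : ‖LpResize a b f‖ = ‖f‖ := by
  simp only [norm_eq_sqrt_re_inner (𝕜 := ℝ), RCLike.re_to_real, inner_LpResize hab]

section InnerPoint

variable {E : Type*} [NormedAddCommGroup E] [InnerProductSpace ℝ E]

/-- `‖x‖ ‖y‖ sin ∠(x, y)`. -/
noncomputable def wedgeNorm (x y : E) : ℝ := √(‖x‖ ^ 2 * ‖y‖ ^ 2 - ⟪x, y⟫ ^ 2)

theorem wedgeNorm_nonneg (x y : E) : 0 ≤ wedgeNorm x y := Real.sqrt_nonneg _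

theorem wedgeNorm_comm (x y : E) : wedgeNorm x y = wedgeNorm y x := by
  rw [wedgeNorm, wedgeNorm, real_inner_comm, mul_comm]

theorem wedgeNorm_sq (x y : E) : wedgeNorm x y ^ 2 = ‖x‖ ^ 2 * ‖y‖ ^ 2 - ⟪x, y⟫ ^ 2 := by
  refine Real.sq_sqrt (sub_nonneg.2 ?_)
  simpa [mul_pow, sq_abs] using pow_le_pow_left₀ (abs_nonneg _) (abs_real_inner_le_norm x y) 2

theorem norm_sq_smul_sub_inner_smul (x y : E) :
    ‖‖y‖ ^ 2 • x - ⟪x, y⟫ • y‖ = ‖y‖ * wedgeNorm x y := by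
  refine (sq_eq_sq₀ (norm_nonneg _) (by positivity [wedgeNorm_nonneg x y])).1 ?_
  rw [← real_inner_self_eq_norm_sq, mul_pow, wedgeNorm_sq]
  simp only [inner_sub_left, inner_sub_right, real_inner_smul_left, real_inner_smul_right]
  simp only [real_inner_self_eq_norm_sq, real_inner_comm x y]
  ring

/-- Cauchy–Schwarz for the components of `x` and `w` orthogonal to `y`. -/
theorem inner_mul_inner_sub_wedgeNorm_mul_le (x y w : E) :
    ⟪x, y⟫ * ⟪y, w⟫ - wedgeNorm x y * wedgeNorm y w ≤ ‖y‖ ^ 2 * ⟪x, w⟫ := by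
  rcases eq_or_ne y 0 with rfl | hy
  · simp [wedgeNorm]
  have hcs := neg_le_of_abs_le (abs_real_inner_le_norm (‖y‖ ^ 2 • x - ⟪x, y⟫ • y)
    (‖y‖ ^ 2 • w - ⟪w, y⟫ • y))
  have hinner : ⟪‖y‖ ^ 2 • x - ⟪x, y⟫ • y, ‖y‖ ^ 2 • w - ⟪w, y⟫ • y⟫ =
      ‖y‖ ^ 2 * (‖y‖ ^ 2 * ⟪x, w⟫ - ⟪x, y⟫ * ⟪y, w⟫) := by
    simp only [inner_sub_left, inner_sub_right, real_inner_smul_left, real_inner_smul_right,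
      real_inner_self_eq_norm_sq, real_inner_comm w y]
    ring
  rw [norm_sq_smul_sub_inner_smul, norm_sq_smul_sub_inner_smul, wedgeNorm_comm w y, hinner] at hcs
  have hy2 : 0 < ‖y‖ ^ 2 := by positivity
  nlinarith

noncomputable def srgPoint (x y : E) : ℂ := ⟨⟪x, y⟫ / ‖x‖ ^ 2, wedgeNorm x y / ‖x‖ ^ 2⟩

theorem ofReal_div_mul_exp_arccos (x y : E) :
    ((‖y‖ / ‖x‖ : ℝ) : ℂ) * Complex.exp (Complex.I * (Real.arccos (⟪x, y⟫ / (‖x‖ * ‖y‖)) : ℂ)) =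
      srgPoint x y := by
  rcases eq_or_ne x 0 with rfl | hx
  · apply Complex.ext <;> simp [srgPoint, wedgeNorm]
  rcases eq_or_ne y 0 with rfl | hy
  · apply Complex.ext <;> simp [srgPoint, wedgeNorm]
  have hxy : 0 < ‖x‖ * ‖y‖ := by positivity
  have hcos : |⟪x, y⟫ / (‖x‖ * ‖y‖)| ≤ 1 := by
    rw [abs_div, abs_of_pos hxy, div_le_one hxy]
    exact abs_real_inner_le_norm x y
  have hsin : √(1 - (⟪x, y⟫ / (‖x‖ * ‖y‖)) ^ 2) = wedgeNorm x y / (‖x‖ * ‖y‖) := by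
    rw [show 1 - (⟪x, y⟫ / (‖x‖ * ‖y‖)) ^ 2 = (‖x‖ ^ 2 * ‖y‖ ^ 2 - ⟪x, y⟫ ^ 2) / (‖x‖ * ‖y‖) ^ 2 by
      field_simp, Real.sqrt_div' _ (sq_nonneg _), Real.sqrt_sq hxy.le, wedgeNorm]
  rw [mul_comm Complex.I, Complex.exp_mul_I, ← Complex.ofReal_cos, ← Complex.ofReal_sin,
    Real.cos_arccos (abs_le.1 hcos).1 (abs_le.1 hcos).2, Real.sin_arccos, hsin]
  apply Complex.ext <;>
    simp only [srgPoint, Complex.mul_re, Complex.mul_im, Complex.add_re, Complex.add_im,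
      Complex.ofReal_re, Complex.ofReal_im, Complex.I_re, Complex.I_im] <;>
    field_simp <;> ring

theorem normSq_srgPoint (x y : E) : Complex.normSq (srgPoint x y) = ‖y‖ ^ 2 / ‖x‖ ^ 2 := by
  rcases eq_or_ne x 0 with rfl | hx
  · simp [srgPoint]
  have hx2 : ‖x‖ ^ 2 ≠ 0 := by positivity
  rw [Complex.normSq_apply, srgPoint, ← sq, ← sq, div_pow, div_pow, wedgeNorm_sq]
  field_simp
  ring

theorem inv_srgPoint (x y : E) : (srgPoint x y)⁻¹ = conj (srgPoint y x) := by
  rcases eq_or_ne x 0 with rfl | hx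
  · apply Complex.ext <;> simp [srgPoint, wedgeNorm]
  rcases eq_or_ne y 0 with rfl | hy
  · apply Complex.ext <;> simp [srgPoint, wedgeNorm]
  have hx2 : ‖x‖ ^ 2 ≠ 0 := by positivity
  have hy2 : ‖y‖ ^ 2 ≠ 0 := by positivity
  apply Complex.ext
  · rw [Complex.inv_re, normSq_srgPoint, Complex.conj_re, srgPoint, srgPoint,
      real_inner_comm]
    field_simp
  · rw [Complex.inv_im, normSq_srgPoint, Complex.conj_im, srgPoint, srgPoint,
      wedgeNorm_comm]
    field_simp

theorem norm_mul_norm_inv_srgPoint_add_le (x y w : E) {τ : ℝ} (hτ : 0 ≤ τ) :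
    ‖y‖ * ‖(srgPoint x y)⁻¹ + τ * srgPoint y w‖ ≤ ‖x + τ • w‖ := by
  rcases eq_or_ne y 0 with rfl | hy
  · simp
  have hy2 : ‖y‖ ^ 2 ≠ 0 := by positivity
  have hperp := mul_le_mul_of_nonneg_left (inner_mul_inner_sub_wedgeNorm_mul_le x y w) hτ
  rw [← sq_le_sq₀ (by positivity) (norm_nonneg _), mul_pow, Complex.sq_norm, Complex.normSq_apply,
    norm_add_sq_real, norm_smul, inner_smul_right, inv_srgPoint]
  simp only [srgPoint, Complex.add_re, Complex.add_im, Complex.conj_re, Complex.conj_im,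
    Complex.mul_re, Complex.mul_im, Complex.ofReal_re, Complex.ofReal_im, Real.norm_eq_abs]
  rw [abs_of_nonneg hτ, wedgeNorm_comm y x, real_inner_comm x y]
  field_simp
  linear_combination wedgeNorm_sq x y + τ ^ 2 * wedgeNorm_sq y w + 2 * hperp

end InnerPoint

theorem mimoPoint_eq_srgPoint {p q : ℕ} (du : L2S p) (dy : L2S q) :
    mimoPoint du dy = srgPoint (LpResize p (max p q) du) (LpResize q (max p q) dy) := by
  rw [mimoPoint, mimoPairing, ← norm_LpResize (le_max_left p q) du,
    ← norm_LpResize (le_max_right p q) dy, ofReal_div_mul_exp_arccos]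

theorem norm_mimoPoint {p q : ℕ} (du : L2S p) (dy : L2S q) : ‖mimoPoint du dy‖ = ‖dy‖ / ‖du‖ := by
  rw [← sq_eq_sq₀ (norm_nonneg _) (by positivity), Complex.sq_norm, mimoPoint_eq_srgPoint,
    normSq_srgPoint, norm_LpResize (le_max_left p q), norm_LpResize (le_max_right p q), div_pow]

theorem exists_lipschitzWith_of_isBounded_mimoSRG {p q : ℕ} {R : L2S p → L2S q}
    (hR : Bornology.IsBounded (mimoSRG R)) : ∃ K, LipschitzWith K R := by
  obtain ⟨C, hC⟩ := isBounded_iff_forall_norm_le.1 hR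
  refine ⟨C.toNNReal, LipschitzWith.of_dist_le' fun u v => ?_⟩
  rcases eq_or_ne u v with rfl | huv
  · simp
  have hpos : 0 < ‖u - v‖ := norm_pos_iff.2 (sub_ne_zero.2 huv)
  have h := hC _ ⟨u, v, huv, Or.inl rfl⟩
  rw [norm_mimoPoint, div_le_iff₀ hpos] at h
  simpa only [dist_eq_norm] using h

theorem norm_div_normSq_add_mul_conj (z w : ℂ) (τ : ℝ) :
    ‖z / (Complex.normSq z : ℂ) + τ * conj w‖ = ‖z⁻¹ + τ * w‖ := by
  rw [← Complex.norm_conj (z⁻¹ + τ * w), map_add, map_mul, Complex.conj_ofReal, Complex.inv_def,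
    map_mul, Complex.conj_conj, Complex.conj_ofReal, div_eq_mul_inv, Complex.ofReal_inv]

theorem mul_norm_sub_le_of_mimoSRG {p q : ℕ} (H₁ : L2S p → L2S q) (H₂ : L2S q → L2S p)
    {r τ : ℝ} (hτ : 0 ≤ τ)
    (hdist : ∀ z₁ ∈ mimoSRG H₁, z₁ ≠ 0 → ∀ z₂ ∈ mimoSRG H₂,
      r ≤ ‖z₁ / (Complex.normSq z₁ : ℂ) + τ * z₂‖)
    (u v : L2S p) :
    r * ‖H₁ u - H₁ v‖ ≤ ‖u - v + τ • (H₂ (H₁ u) - H₂ (H₁ v))‖ := by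
  set y := H₁ u - H₁ v
  set w := H₂ (H₁ u) - H₂ (H₁ v)
  rcases eq_or_ne y 0 with hy | hy
  · simp [hy]
  have huv : u ≠ v := fun h => hy (by simp [y, h])
  have hH₁ : H₁ u ≠ H₁ v := sub_ne_zero.1 hy
  set n := max p q
  have hz₁ : mimoPoint (u - v) y = srgPoint (LpResize p n (u - v)) (LpResize q n y) :=
    mimoPoint_eq_srgPoint _ _
  have hz₂ : mimoPoint y w = srgPoint (LpResize q n y) (LpResize p n w) := by
    rw [mimoPoint_eq_srgPoint, max_comm]
  have hz₁0 : mimoPoint (u - v) y ≠ 0 := by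
    rw [← norm_ne_zero_iff, norm_mimoPoint]
    exact div_ne_zero (norm_ne_zero_iff.2 hy) (norm_ne_zero_iff.2 (sub_ne_zero.2 huv))
  have hr := hdist _ ⟨u, v, huv, Or.inl rfl⟩ hz₁0 _ ⟨H₁ u, H₁ v, hH₁, Or.inr rfl⟩
  rw [norm_div_normSq_add_mul_conj, hz₁, hz₂] at hr
  calc r * ‖y‖ ≤ ‖y‖ * ‖(srgPoint (LpResize p n (u - v)) (LpResize q n y))⁻¹ +
        τ * srgPoint (LpResize q n y) (LpResize p n w)‖ := by
        rw [mul_comm]; exact mul_le_mul_of_nonneg_left hr (norm_nonneg _)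
    _ ≤ ‖LpResize p n (u - v) + τ • LpResize p n w‖ := by
        have h := norm_mul_norm_inv_srgPoint_add_le (LpResize p n (u - v)) (LpResize q n y)
          (LpResize p n w) hτ
        rwa [norm_LpResize (le_max_right p q)] at h
    _ = ‖u - v + τ • w‖ := by
        rw [← map_smul, ← map_add, norm_LpResize (le_max_left p q)]

section Continuation

variable {X : Type*} [NormedAddCommGroup X] [NormedSpace ℝ X] [CompleteSpace X]

theorem surjective_add_smul_of_surjective {G : X → X} {K C : ℝ≥0} {τ τ' : ℝ}
    (hG : LipschitzWith K G) (hC : AntilipschitzWith C fun x => x + τ • G x)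
    (hsurj : Function.Surjective fun x => x + τ • G x) (hτ' : C * |τ' - τ| * K < 1) :
    Function.Surjective fun x => x + τ' • G x := by
  intro g
  have hinv := Function.rightInverse_surjInv hsurj
  have hlip : LipschitzWith (‖τ' - τ‖₊ * K) fun e => g - (τ' - τ) • G e := by
    simpa using (LipschitzWith.const g).sub ((lipschitzWith_smul (τ' - τ)).comp hG)
  have hΦ : ContractingWith (C * (‖τ' - τ‖₊ * K))
      fun e => Function.surjInv hsurj (g - (τ' - τ) • G e) := by
    refine ⟨?_, (hC.to_rightInverse hinv).comp hlip⟩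
    rw [← NNReal.coe_lt_coe]
    simpa [mul_assoc] using hτ'
  obtain ⟨e, he⟩ : ∃ e, Function.surjInv hsurj (g - (τ' - τ) • G e) = e :=
    ⟨_, hΦ.fixedPoint_isFixedPt⟩
  have h := hinv (g - (τ' - τ) • G e)
  rw [he] at h
  exact ⟨e, by linear_combination (norm := module) h⟩

theorem bijective_add_of_forall_antilipschitzWith {G : X → X} {K C : ℝ≥0}
    (hG : LipschitzWith K G)
    (hC : ∀ τ ∈ Set.Icc (0 : ℝ) 1, AntilipschitzWith C fun x => x + τ • G x) :
    Function.Bijective fun x => x + G x := by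
  obtain ⟨N, hN⟩ := exists_nat_gt (C * K : ℝ)
  have hN0 : (0 : ℝ) < N := lt_of_le_of_lt (by positivity) hN
  have hstep : ∀ k ≤ N, Function.Surjective fun x => x + ((k : ℝ) / N) • G x := by
    intro k
    induction k with
    | zero => exact fun _ g => ⟨g, by simp⟩
    | succ k ih =>
      intro hk
      have hkN : k ≤ N := k.le_succ.trans hk
      have hτ : (k : ℝ) / N ≤ 1 := (div_le_one hN0).2 (by exact_mod_cast hkN)
      refine surjective_add_smul_of_surjective hG (hC _ ⟨by positivity, hτ⟩) (ih hkN) ?_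
      rw [show ((k + 1 : ℕ) : ℝ) / N - k / N = 1 / N by push_cast; ring,
        abs_of_pos (by positivity), mul_one_div, div_mul_eq_mul_div, div_lt_one hN0]
      linarith
  refine ⟨fun u v huv => ?_, by simpa [hN0.ne'] using hstep N le_rfl⟩
  exact (hC 1 ⟨zero_le_one, le_rfl⟩).injective (by simpa using huv)

end Continuation

section Feedback

variable {X Y : Type*} [NormedAddCommGroup X] [NormedSpace ℝ X] [SeminormedAddCommGroup Y]

theorem antilipschitzWith_add_smul_comp {H₁ : X → Y} {H₂ : Y → X} {K : ℝ≥0}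
    (hH₂ : LipschitzWith K H₂) {r τ : ℝ} (hr : 0 < r) (hτ : τ ∈ Set.Icc (0 : ℝ) 1)
    (hbound : ∀ u v, r * ‖H₁ u - H₁ v‖ ≤ ‖u - v + τ • (H₂ (H₁ u) - H₂ (H₁ v))‖) :
    AntilipschitzWith (1 + K / r.toNNReal) fun x => x + τ • H₂ (H₁ x) := by
  refine AntilipschitzWith.of_le_mul_dist fun u v => ?_
  set d := u - v + τ • (H₂ (H₁ u) - H₂ (H₁ v))
  have hd : u + τ • H₂ (H₁ u) - (v + τ • H₂ (H₁ v)) = d := by module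
  have hH₁ : K * ‖H₁ u - H₁ v‖ ≤ K / r * ‖d‖ := by
    rw [div_mul_eq_mul_div, le_div_iff₀ hr, mul_assoc, mul_comm _ r]
    exact mul_le_mul_of_nonneg_left (hbound u v) K.2
  rw [dist_eq_norm, dist_eq_norm, hd]
  calc ‖u - v‖ = ‖d - τ • (H₂ (H₁ u) - H₂ (H₁ v))‖ := by congr 1; module
    _ ≤ ‖d‖ + τ * ‖H₂ (H₁ u) - H₂ (H₁ v)‖ :=
      (norm_sub_le _ _).trans_eq (by rw [norm_smul, Real.norm_of_nonneg hτ.1])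
    _ ≤ ‖d‖ + 1 * (K * ‖H₁ u - H₁ v‖) := by
      gcongr
      · exact hτ.2
      · exact hH₂.norm_sub_le _ _
    _ ≤ ((1 + K / r.toNNReal : ℝ≥0) : ℝ) * ‖d‖ := by
      push_cast [Real.coe_toNNReal _ hr.le]
      linarith

theorem exists_feedback_solution_of_incremental_bound [CompleteSpace X] (H₁ : X → Y)
    (H₂ : Y → X) {K : ℝ≥0} (hH₂ : LipschitzWith K H₂) {r : ℝ} (hr : 0 < r)
    (hbound : ∀ τ ∈ Set.Icc (0 : ℝ) 1, ∀ u v,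
      r * ‖H₁ u - H₁ v‖ ≤ ‖u - v + τ • (H₂ (H₁ u) - H₂ (H₁ v))‖) :
    ∃ E : X → X,
      (∀ u, E u = u - H₂ (H₁ (E u))) ∧
      (∀ u e, e = u - H₂ (H₁ e) → e = E u) ∧
      (∀ u₁ u₂, ‖H₁ (E u₁) - H₁ (E u₂)‖ ≤ (1 / r) * ‖u₁ - u₂‖) := by
  have hH₁ : LipschitzWith r⁻¹.toNNReal H₁ := LipschitzWith.of_dist_le' fun u v => by
    have h := hbound 0 ⟨le_rfl, zero_le_one⟩ u v
    rw [zero_smul, add_zero] at h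
    rw [dist_eq_norm, dist_eq_norm, inv_mul_eq_div, le_div_iff₀ hr, mul_comm]
    exact h
  obtain ⟨hinj, hsurj⟩ := bijective_add_of_forall_antilipschitzWith (hH₂.comp hH₁)
    fun τ hτ => antilipschitzWith_add_smul_comp hH₂ hr hτ (hbound τ hτ)
  set E := Function.surjInv hsurj
  have hE : ∀ u, E u + H₂ (H₁ (E u)) = u := Function.surjInv_eq hsurj
  refine ⟨E, fun u => eq_sub_of_add_eq (hE u), fun u e he => hinj ?_, fun u₁ u₂ => ?_⟩
  · change e + H₂ (H₁ e) = E u + H₂ (H₁ (E u))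
    rw [hE]
    exact eq_sub_iff_add_eq.1 he
  · have h := hbound 1 ⟨zero_le_one, le_rfl⟩ (E u₁) (E u₂)
    rw [one_smul, show E u₁ - E u₂ + (H₂ (H₁ (E u₁)) - H₂ (H₁ (E u₂))) = u₁ - u₂ by
      linear_combination (norm := module) hE u₁ - hE u₂] at h
    rw [one_div_mul_eq_div, le_div_iff₀ hr, mul_comm]
    exact h

end Feedback

theorem stmt14_general (p q : ℕ) (H₁ : L2S p → L2S q) (H₂ : L2S q → L2S p)
    (hb2 : Bornology.IsBounded (mimoSRG H₂))
    (r : ℝ) (hr : 0 < r)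
    (hdist : ∀ τ ∈ Set.Icc (0 : ℝ) 1,
      ∀ z₁ ∈ { w : ℂ | ∃ z ∈ mimoSRG H₁, z ≠ 0 ∧ w = z / ((Complex.normSq z : ℝ) : ℂ) },
      ∀ z₂ ∈ { w : ℂ | ∃ z ∈ mimoSRG H₂, w = -(τ : ℂ) * z },
        r ≤ ‖z₁ - z₂‖) :
    ∃ E : L2S p → L2S p,
      (∀ u, E u = u - H₂ (H₁ (E u))) ∧
      (∀ u e, e = u - H₂ (H₁ e) → e = E u) ∧
      (∀ u₁ u₂, ‖H₁ (E u₁) - H₁ (E u₂)‖ ≤ (1 / r) * ‖u₁ - u₂‖) := by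
  obtain ⟨K, hK⟩ := exists_lipschitzWith_of_isBounded_mimoSRG hb2
  refine exists_feedback_solution_of_incremental_bound H₁ H₂ hK hr fun τ hτ => ?_
  refine mul_norm_sub_le_of_mimoSRG H₁ H₂ hτ.1 fun z₁ hz₁ hz₁0 z₂ hz₂ => ?_
  simpa [sub_eq_add_neg] using hdist τ hτ _ ⟨z₁, hz₁, hz₁0, rfl⟩ _ ⟨z₂, hz₂, rfl⟩

/-- incremental MIMO SRG stability theorem: if at least one of `SRG(H₁)`,
`SRG(H₂)` satisfies the chord property, both SRGs are bounded, and the Möbius inverse of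
`SRG(H₁)` stays at distance at least `r > 0` from `−τ·SRG(H₂)` for all `τ ∈ [0,1]`, then for
every `u ∈ L₂^p` the feedback equation `e = u − H₂(H₁ e)` has a unique solution `e = E u`, and
the closed-loop map `u ↦ H₁(E u)` has incremental `L₂`-gain at most `1/r`. -/
theorem stmt14 (p q : ℕ) (H₁ : L2S p → L2S q) (H₂ : L2S q → L2S p)
    (hchord : ChordProperty (mimoSRG H₁) ∨ ChordProperty (mimoSRG H₂))
    (hb1 : Bornology.IsBounded (mimoSRG H₁)) (hb2 : Bornology.IsBounded (mimoSRG H₂))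
    (r : ℝ) (hr : 0 < r)
    (hdist : ∀ τ ∈ Set.Icc (0 : ℝ) 1,
      ∀ z₁ ∈ { w : ℂ | ∃ z ∈ mimoSRG H₁, z ≠ 0 ∧ w = z / ((Complex.normSq z : ℝ) : ℂ) },
      ∀ z₂ ∈ { w : ℂ | ∃ z ∈ mimoSRG H₂, w = -(τ : ℂ) * z },
        r ≤ ‖z₁ - z₂‖) :
    ∃ E : L2S p → L2S p,
      (∀ u, E u = u - H₂ (H₁ (E u))) ∧
      (∀ u e, e = u - H₂ (H₁ e) → e = E u) ∧
      (∀ u₁ u₂, ‖H₁ (E u₁) - H₁ (E u₂)‖ ≤ (1 / r) * ‖u₁ - u₂‖) :=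
  stmt14_general p q H₁ H₂ hb2 r hr hdist
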